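/- Let t ∈ (0,1), let A₁, …, A_m be pairwise commuting positive definite n×n complex matrices, and let w₁, …, w_m be positive reals with Σ_j w_j = 1. Then the unique positive definite matrix minimizing X ↦ Σ_{j=1}^m w_j Tr((1-t)A_j + tX - A_j^{1-t}X^t) over positive definite matrices commuting with all A_j is the unique positive definite solution (commuting with all A_j) of the equation X = Σ_{j=1}^m w_j A_j^{1-t} X^t, i.e., the weighted power mean of order 1−t of A₁, …, A_m. -/

import Mathlib

open Matrix
open scoped ComplexOrder

/-- The real power `A^s` of a positive definite matrix, via the functional calculus. -/
noncomputable def matPow {n : ℕ} (A : Matrix (Fin n) (Fin n) ℂ) (s : ℝ) :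
    Matrix (Fin n) (Fin n) ℂ :=
  cfc (fun x : ℝ => x ^ s) A

/-!
Write `Φ_t(P, X) = Tr((1-t)P + tX - P^{1-t} X^t)`, let `C = Σ_j w_j A_j^{1-t}` and
`Q = C^{1/(1-t)}`. Since `Q^{1-t} = C` and `Σ_j w_j = 1`, linearity of the trace gives
`Σ_j w_j Φ_t(A_j, X) = Φ_t(Q, X) + const`.

In an orthonormal eigenbasis `(u_i)` of `P` with eigenvalues `d_i`,
`Φ_t(P, X) = Σ_i ((1-t) d_i + t⟨u_i, X u_i⟩ - d_i^{1-t} ⟨u_i, X^t u_i⟩)`. Jensen's inequality for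
the concave `x ↦ x^t` in the spectral decomposition of `X` gives `⟨u, X^t u⟩ ≤ ⟨u, X u⟩^t`, and
weighted AM-GM then makes every summand nonnegative. Equality forces `⟨u_i, X u_i⟩ = d_i` and
equality in Jensen, which makes `u_i` an eigenvector of `X` for `d_i`; so `Φ_t(P, X) = 0` iff
`X = P`, and the minimizer is `Q`. Finally `X = C X^t` says `X^{1-t} = C`, i.e. `X = Q`.
-/

section OrthonormalBasis

variable {𝕜 n : Type*} [RCLike 𝕜] [Fintype n]

theorem OrthonormalBasis.star_dotProduct_self (b : OrthonormalBasis n 𝕜 (EuclideanSpace 𝕜 n))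
    (j : n) : star ⇑(b j) ⬝ᵥ ⇑(b j) = 1 := by
  rw [dotProduct_comm, ← EuclideanSpace.inner_eq_star_dotProduct, b.inner_eq_one]

theorem OrthonormalBasis.sum_star_dotProduct_smul (b : OrthonormalBasis n 𝕜 (EuclideanSpace 𝕜 n))
    (v : n → 𝕜) : ∑ k, (star ⇑(b k) ⬝ᵥ v) • ⇑(b k) = v := by
  simpa [EuclideanSpace.inner_eq_star_dotProduct, dotProduct_comm] using
    congrArg WithLp.ofLp (b.sum_repr' (WithLp.toLp 2 v))

theorem Matrix.ext_of_mulVec_orthonormalBasis (b : OrthonormalBasis n 𝕜 (EuclideanSpace 𝕜 n))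
    {M N : Matrix n n 𝕜} (h : ∀ j, M *ᵥ ⇑(b j) = N *ᵥ ⇑(b j)) : M = N := by
  refine ext_iff_mulVec.2 fun v => ?_
  rw [← b.sum_star_dotProduct_smul v]
  simp only [mulVec_sum, mulVec_smul, h]

variable [DecidableEq n]

theorem Matrix.trace_eq_sum_star_dotProduct_mulVec
    (b : OrthonormalBasis n 𝕜 (EuclideanSpace 𝕜 n)) (M : Matrix n n 𝕜) :
    M.trace = ∑ j, star ⇑(b j) ⬝ᵥ (M *ᵥ ⇑(b j)) := by
  rw [← M.trace_toLin_eq (EuclideanSpace.basisFun n 𝕜).toBasis,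
    ← toEuclideanLin_eq_toLin_orthonormal, LinearMap.trace_eq_sum_inner _ b]
  simp [EuclideanSpace.inner_eq_star_dotProduct, dotProduct_comm]

end OrthonormalBasis

namespace Matrix

variable {𝕜 n : Type*} [RCLike 𝕜] [Fintype n] [DecidableEq n] {A : Matrix n n 𝕜}

theorem PosDef.pos_of_mem_spectrum (hA : A.PosDef) {x : ℝ} (hx : x ∈ spectrum ℝ A) : 0 < x := by
  rw [hA.1.spectrum_real_eq_range_eigenvalues] at hx
  obtain ⟨i, rfl⟩ := hx
  exact hA.eigenvalues_pos i

namespace IsHermitian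

variable (hA : A.IsHermitian)
include hA

theorem posDef_cfc {f : ℝ → ℝ} (hf : ∀ i, 0 < f (hA.eigenvalues i)) : (cfc f A).PosDef := by
  rw [hA.cfc_eq, IsHermitian.cfc, Unitary.conjStarAlgAut_apply]
  simpa [Unitary.isUnit_coe.posDef_star_right_conjugate_iff] using hf

theorem cfc_mulVec_eigenvectorBasis (f : ℝ → ℝ) (j : n) :
    cfc f A *ᵥ ⇑(hA.eigenvectorBasis j) = f (hA.eigenvalues j) • ⇑(hA.eigenvectorBasis j) := by
  rw [hA.cfc_eq, IsHermitian.cfc, Unitary.conjStarAlgAut_apply, ← mulVec_mulVec, ← mulVec_mulVec,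
    star_eigenvectorUnitary_mulVec, diagonal_mulVec_single, mulVec_single]
  ext i
  simp [RCLike.real_smul_eq_coe_mul, mul_comm]

theorem trace_cfc_mul (f : ℝ → ℝ) (M : Matrix n n 𝕜) :
    (cfc f A * M).trace = ∑ j, (f (hA.eigenvalues j) : 𝕜) *
      (star ⇑(hA.eigenvectorBasis j) ⬝ᵥ (M *ᵥ ⇑(hA.eigenvectorBasis j))) := by
  rw [trace_mul_comm, trace_eq_sum_star_dotProduct_mulVec hA.eigenvectorBasis]
  refine Finset.sum_congr rfl fun j _ => ?_
  rw [← mulVec_mulVec, hA.cfc_mulVec_eigenvectorBasis, mulVec_smul, dotProduct_smul,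
    RCLike.real_smul_eq_coe_mul]

theorem star_dotProduct_cfc_mulVec (f : ℝ → ℝ) (v : n → 𝕜) :
    star v ⬝ᵥ (cfc f A *ᵥ v) =
      ∑ k, ((f (hA.eigenvalues k) * ‖star ⇑(hA.eigenvectorBasis k) ⬝ᵥ v‖ ^ 2 : ℝ) : 𝕜) := by
  conv_lhs => enter [2, 2]; rw [← hA.eigenvectorBasis.sum_star_dotProduct_smul v]
  simp only [mulVec_sum, mulVec_smul, hA.cfc_mulVec_eigenvectorBasis, dotProduct_sum]
  refine Finset.sum_congr rfl fun k _ => ?_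
  have hconj : star v ⬝ᵥ ⇑(hA.eigenvectorBasis k) =
      star (star ⇑(hA.eigenvectorBasis k) ⬝ᵥ v) := by
    rw [← star_dotProduct_star, star_star]
  rw [dotProduct_smul, dotProduct_smul, hconj, RCLike.real_smul_eq_coe_mul, smul_eq_mul,
    RCLike.star_def, mul_left_comm, RCLike.mul_conj]
  push_cast
  ring

theorem re_star_dotProduct_cfc_mulVec (f : ℝ → ℝ) (v : n → 𝕜) :
    RCLike.re (star v ⬝ᵥ (cfc f A *ᵥ v)) =
      ∑ k, ‖star ⇑(hA.eigenvectorBasis k) ⬝ᵥ v‖ ^ 2 • f (hA.eigenvalues k) := by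
  simp [hA.star_dotProduct_cfc_mulVec, mul_comm]

theorem re_star_dotProduct_mulVec (v : n → 𝕜) :
    RCLike.re (star v ⬝ᵥ (A *ᵥ v)) =
      ∑ k, ‖star ⇑(hA.eigenvectorBasis k) ⬝ᵥ v‖ ^ 2 • hA.eigenvalues k := by
  conv_lhs => rw [← cfc_id' ℝ A hA.isSelfAdjoint]
  exact hA.re_star_dotProduct_cfc_mulVec id v

theorem sum_norm_sq_star_dotProduct_eigenvectorBasis {v : n → 𝕜} (hv : star v ⬝ᵥ v = 1) :
    ∑ k, ‖star ⇑(hA.eigenvectorBasis k) ⬝ᵥ v‖ ^ 2 = 1 := by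
  simpa [cfc_const_one ℝ A hA.isSelfAdjoint, hv] using
    (hA.re_star_dotProduct_cfc_mulVec (fun _ => 1) v).symm

theorem re_star_dotProduct_cfc_mulVec_le {f : ℝ → ℝ} {s : Set ℝ} (hf : ConcaveOn ℝ s f)
    (hs : ∀ i, hA.eigenvalues i ∈ s) {v : n → 𝕜} (hv : star v ⬝ᵥ v = 1) :
    RCLike.re (star v ⬝ᵥ (cfc f A *ᵥ v)) ≤ f (RCLike.re (star v ⬝ᵥ (A *ᵥ v))) := by
  rw [hA.re_star_dotProduct_cfc_mulVec, hA.re_star_dotProduct_mulVec]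
  exact hf.le_map_sum (fun _ _ => by positivity)
    (hA.sum_norm_sq_star_dotProduct_eigenvectorBasis hv) fun i _ => hs i

theorem mulVec_eq_smul_of_map_le_re_star_dotProduct_cfc_mulVec {f : ℝ → ℝ} {s : Set ℝ}
    (hf : StrictConcaveOn ℝ s f) (hs : ∀ i, hA.eigenvalues i ∈ s) {v : n → 𝕜}
    (hv : star v ⬝ᵥ v = 1)
    (h : f (RCLike.re (star v ⬝ᵥ (A *ᵥ v))) ≤ RCLike.re (star v ⬝ᵥ (cfc f A *ᵥ v))) :
    A *ᵥ v = (RCLike.re (star v ⬝ᵥ (A *ᵥ v)) : 𝕜) • v := by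
  have hmean := hA.re_star_dotProduct_mulVec v
  have hw := hA.sum_norm_sq_star_dotProduct_eigenvectorBasis hv
  rw [hA.re_star_dotProduct_cfc_mulVec, hmean] at h
  have heq := (hf.map_sum_eq_iff' (fun _ _ => by positivity) hw fun i _ => hs i).1
    (le_antisymm h (hf.concaveOn.le_map_sum (fun _ _ => by positivity) hw fun i _ => hs i))
  rw [← hmean] at heq
  set q := RCLike.re (star v ⬝ᵥ (A *ᵥ v))
  conv_lhs => rw [← hA.eigenvectorBasis.sum_star_dotProduct_smul v]
  conv_rhs => rw [← hA.eigenvectorBasis.sum_star_dotProduct_smul v]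
  simp only [mulVec_sum, mulVec_smul, hA.mulVec_eigenvectorBasis, Finset.smul_sum]
  refine Finset.sum_congr rfl fun k _ => ?_
  by_cases hk : star ⇑(hA.eigenvectorBasis k) ⬝ᵥ v = 0
  · simp [hk]
  · rw [heq k (Finset.mem_univ k) (by positivity), smul_comm,
      RCLike.real_smul_eq_coe_smul (K := 𝕜)]

end IsHermitian

end Matrix

section matPow

variable {n : ℕ} {A : Matrix (Fin n) (Fin n) ℂ}

theorem Matrix.IsHermitian.matPow_zero (hA : A.IsHermitian) : matPow A 0 = 1 := by
  simpa [matPow] using cfc_const_one ℝ A hA.isSelfAdjoint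

theorem Matrix.IsHermitian.matPow_one (hA : A.IsHermitian) : matPow A 1 = A := by
  simpa [matPow] using cfc_id' ℝ A hA.isSelfAdjoint

namespace Matrix.PosDef

theorem posDef_matPow (hA : A.PosDef) (s : ℝ) : (matPow A s).PosDef :=
  hA.1.posDef_cfc fun i => Real.rpow_pos_of_pos (hA.eigenvalues_pos i) s

theorem matPow_add (hA : A.PosDef) (s r : ℝ) :
    matPow A (s + r) = matPow A s * matPow A r := by
  rw [matPow, matPow, matPow, ← cfc_mul _ _ A (finite_real_spectrum.continuousOn _)
    (finite_real_spectrum.continuousOn _)]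
  exact cfc_congr fun x hx => Real.rpow_add (hA.pos_of_mem_spectrum hx) s r

theorem matPow_matPow (hA : A.PosDef) (s r : ℝ) :
    matPow (matPow A s) r = matPow A (s * r) := by
  rw [matPow, matPow, matPow, ← cfc_comp' _ _ A ((finite_real_spectrum.image _).continuousOn _)
    (finite_real_spectrum.continuousOn _) hA.1.isSelfAdjoint]
  exact cfc_congr fun x hx => (Real.rpow_mul (hA.pos_of_mem_spectrum hx).le s r).symm

theorem matPow_eq_iff {C : Matrix (Fin n) (Fin n) ℂ} (hA : A.PosDef) (hC : C.PosDef) {s : ℝ}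
    (hs : s ≠ 0) : matPow A s = C ↔ A = matPow C s⁻¹ := by
  constructor
  · rintro rfl
    rw [hA.matPow_matPow, mul_inv_cancel₀ hs, hA.1.matPow_one]
  · rintro rfl
    rw [hC.matPow_matPow, inv_mul_cancel₀ hs, hC.1.matPow_one]

theorem eq_mul_matPow_iff (hA : A.PosDef) (C : Matrix (Fin n) (Fin n) ℂ) (t : ℝ) :
    A = C * matPow A t ↔ matPow A (1 - t) = C := by
  constructor
  · intro h
    calc matPow A (1 - t) = matPow A 1 * matPow A (-t) := by rw [← hA.matPow_add]; ring_nf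
      _ = C * matPow A (t + -t) := by
        rw [hA.1.matPow_one, hA.matPow_add, ← mul_assoc, ← h]
      _ = C := by rw [add_neg_cancel, hA.1.matPow_zero, mul_one]
  · rintro rfl
    rw [← hA.matPow_add, sub_add_cancel, hA.1.matPow_one]

theorem re_star_dotProduct_matPow_mulVec_le {t : ℝ} (ht0 : 0 < t) (ht1 : t < 1)
    (hA : A.PosDef) {v : Fin n → ℂ} (hv : star v ⬝ᵥ v = 1) :
    (star v ⬝ᵥ (matPow A t *ᵥ v)).re ≤ (star v ⬝ᵥ (A *ᵥ v)).re ^ t :=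
  hA.1.re_star_dotProduct_cfc_mulVec_le (Real.strictConcaveOn_rpow ht0 ht1).concaveOn
    (fun i => Set.mem_Ici.2 (hA.eigenvalues_pos i).le) hv

theorem mulVec_eq_smul_of_re_star_dotProduct_matPow_mulVec_eq {t : ℝ} (ht0 : 0 < t)
    (ht1 : t < 1) (hA : A.PosDef) {v : Fin n → ℂ} (hv : star v ⬝ᵥ v = 1)
    (h : (star v ⬝ᵥ (matPow A t *ᵥ v)).re = (star v ⬝ᵥ (A *ᵥ v)).re ^ t) :
    A *ᵥ v = ((star v ⬝ᵥ (A *ᵥ v)).re : ℂ) • v :=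
  hA.1.mulVec_eq_smul_of_map_le_re_star_dotProduct_cfc_mulVec (Real.strictConcaveOn_rpow ht0 ht1)
    (fun i => Set.mem_Ici.2 (hA.eigenvalues_pos i).le) hv h.ge

end Matrix.PosDef

end matPow

theorem Real.rpow_one_sub_mul_le_of_le_rpow {t d q y : ℝ} (ht0 : 0 < t) (ht1 : t < 1)
    (hd : 0 ≤ d) (hq : 0 ≤ q) (hy : y ≤ q ^ t) : d ^ (1 - t) * y ≤ (1 - t) * d + t * q :=
  (mul_le_mul_of_nonneg_left hy (Real.rpow_nonneg hd _)).trans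
    (Real.geom_mean_le_arith_mean2_weighted (by linarith) ht0.le hd hq (by ring))

theorem Real.eq_and_eq_rpow_of_rpow_one_sub_mul_eq {t d q y : ℝ} (ht0 : 0 < t) (ht1 : t < 1)
    (hd : 0 < d) (hq : 0 ≤ q) (hy : y ≤ q ^ t) (h : d ^ (1 - t) * y = (1 - t) * d + t * q) :
    q = d ∧ y = q ^ t := by
  have hdt : 0 < d ^ (1 - t) := Real.rpow_pos_of_pos hd _
  have hgeom : d ^ (1 - t) * q ^ t = (1 - t) * d + t * q :=
    le_antisymm (Real.geom_mean_le_arith_mean2_weighted (by linarith) ht0.le hd.le hq (by ring))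
      (h ▸ mul_le_mul_of_nonneg_left hy hdt.le)
  exact ⟨((Real.geom_mean_eq_arith_mean2_weighted_iff_of_pos (by linarith) ht0 hd.le hq
    (by ring)).1 hgeom).symm, mul_left_cancel₀ hdt.ne' (h.trans hgeom.symm)⟩

section hellingerDiv

variable {n : ℕ}

noncomputable def hellingerDiv (t : ℝ) (A B : Matrix (Fin n) (Fin n) ℂ) : ℝ :=
  ((1 - t) • A + t • B - matPow A (1 - t) * matPow B t).trace.re

theorem hellingerDiv_eq (t : ℝ) (A B : Matrix (Fin n) (Fin n) ℂ) :
    hellingerDiv t A B =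
      (1 - t) * A.trace.re + t * B.trace.re - (matPow A (1 - t) * matPow B t).trace.re := by
  simp [hellingerDiv, trace_sub, trace_add, trace_smul]

theorem Matrix.IsHermitian.hellingerDiv_eq_sum {P : Matrix (Fin n) (Fin n) ℂ} (hP : P.IsHermitian)
    (t : ℝ) (X : Matrix (Fin n) (Fin n) ℂ) :
    hellingerDiv t P X = ∑ j, ((1 - t) * hP.eigenvalues j
      + t * (star ⇑(hP.eigenvectorBasis j) ⬝ᵥ (X *ᵥ ⇑(hP.eigenvectorBasis j))).re
      - hP.eigenvalues j ^ (1 - t) *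
        (star ⇑(hP.eigenvectorBasis j) ⬝ᵥ (matPow X t *ᵥ ⇑(hP.eigenvectorBasis j))).re) := by
  rw [hellingerDiv_eq, hP.trace_eq_sum_eigenvalues, trace_eq_sum_star_dotProduct_mulVec
    hP.eigenvectorBasis X, matPow, hP.trace_cfc_mul]
  simp [Finset.sum_sub_distrib, Finset.sum_add_distrib, Finset.mul_sum]

variable {t : ℝ} {P X : Matrix (Fin n) (Fin n) ℂ}

theorem hellingerDiv_self (hP : P.PosDef) : hellingerDiv t P P = 0 := by
  rw [hellingerDiv, ← hP.matPow_add, sub_add_cancel, hP.1.matPow_one, ← add_smul,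
    sub_add_cancel, one_smul, sub_self, trace_zero, Complex.zero_re]

theorem hellingerDiv_nonneg (ht0 : 0 < t) (ht1 : t < 1) (hP : P.PosDef) (hX : X.PosDef) :
    0 ≤ hellingerDiv t P X := by
  have hb := hP.1.eigenvectorBasis.star_dotProduct_self
  rw [hP.1.hellingerDiv_eq_sum]
  exact Finset.sum_nonneg fun j _ => sub_nonneg.2 <|
    Real.rpow_one_sub_mul_le_of_le_rpow ht0 ht1 (hP.eigenvalues_pos j).le
      (hX.posSemidef.re_dotProduct_nonneg _) (hX.re_star_dotProduct_matPow_mulVec_le ht0 ht1 (hb j))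

theorem hellingerDiv_eq_zero_iff (ht0 : 0 < t) (ht1 : t < 1) (hP : P.PosDef) (hX : X.PosDef) :
    hellingerDiv t P X = 0 ↔ X = P := by
  refine ⟨fun h => ?_, fun h => by rw [h, hellingerDiv_self hP]⟩
  set b := hP.1.eigenvectorBasis
  have hb := b.star_dotProduct_self
  have hq (j : Fin n) : 0 ≤ (star ⇑(b j) ⬝ᵥ (X *ᵥ ⇑(b j))).re :=
    hX.posSemidef.re_dotProduct_nonneg _
  have hjensen (j : Fin n) := hX.re_star_dotProduct_matPow_mulVec_le ht0 ht1 (hb j)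
  rw [hP.1.hellingerDiv_eq_sum] at h
  have hterm := (Finset.sum_eq_zero_iff_of_nonneg fun j _ => sub_nonneg.2 <|
    Real.rpow_one_sub_mul_le_of_le_rpow ht0 ht1 (hP.eigenvalues_pos j).le (hq j) (hjensen j)).1 h
  refine ext_of_mulVec_orthonormalBasis b fun j => ?_
  obtain ⟨hqd, hy⟩ := Real.eq_and_eq_rpow_of_rpow_one_sub_mul_eq ht0 ht1 (hP.eigenvalues_pos j)
    (hq j) (hjensen j) (sub_eq_zero.1 (hterm j (Finset.mem_univ j))).symm
  rw [hX.mulVec_eq_smul_of_re_star_dotProduct_matPow_mulVec_eq ht0 ht1 (hb j) hy, hqd,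
    hP.1.mulVec_eigenvectorBasis, Complex.coe_smul]

theorem sum_mul_hellingerDiv {ι : Type*} [Fintype ι] (w : ι → ℝ) (hw : ∑ j, w j = 1)
    (A : ι → Matrix (Fin n) (Fin n) ℂ) {Q : Matrix (Fin n) (Fin n) ℂ}
    (hQ : matPow Q (1 - t) = ∑ j, w j • matPow (A j) (1 - t)) (X : Matrix (Fin n) (Fin n) ℂ) :
    ∑ j, w j * hellingerDiv t (A j) X =
      hellingerDiv t Q X + (1 - t) * (∑ j, w j * (A j).trace.re - Q.trace.re) := by
  simp only [hellingerDiv_eq, hQ, Finset.sum_mul, trace_sum, smul_mul_assoc, trace_smul,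
    Complex.re_sum, Complex.real_smul, Complex.re_ofReal_mul, mul_sub, mul_add,
    Finset.sum_sub_distrib, Finset.sum_add_distrib, Finset.mul_sum, mul_left_comm (1 - t)]
  rw [← Finset.sum_mul, hw]
  ring

end hellingerDiv

theorem commutative_power_barycenter_general {n m : ℕ} (t : ℝ) (ht0 : 0 < t) (ht1 : t < 1)
    (A : Fin m → Matrix (Fin n) (Fin n) ℂ) (hA : ∀ j, (A j).PosDef)
    (hAcomm : ∀ j k, Commute (A j) (A k))
    (w : Fin m → ℝ) (hw : ∀ j, 0 < w j) (hw1 : ∑ j, w j = 1)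
    (X₀ : Matrix (Fin n) (Fin n) ℂ) (hX₀ : X₀.PosDef) :
    (∀ X : Matrix (Fin n) (Fin n) ℂ, X.PosDef → (∀ j, Commute (A j) X) →
        ∑ j, w j * (((1 - t) • A j + t • X₀ - matPow (A j) (1 - t) * matPow X₀ t).trace).re ≤
          ∑ j, w j * (((1 - t) • A j + t • X - matPow (A j) (1 - t) * matPow X t).trace).re) ↔
      X₀ = ∑ j, w j • (matPow (A j) (1 - t) * matPow X₀ t) := by
  set C := ∑ j, w j • matPow (A j) (1 - t)
  have hC : C.PosDef := posDef_sum (Finset.nonempty_of_sum_ne_zero (hw1 ▸ one_ne_zero))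
    fun j _ => ((hA j).posDef_matPow _).smul (hw j)
  set Q := matPow C (1 - t)⁻¹
  have hQ : Q.PosDef := hC.posDef_matPow _
  have hQC : matPow Q (1 - t) = C := (hQ.matPow_eq_iff hC (by linarith)).2 rfl
  have hAQ (j : Fin m) : Commute (A j) Q :=
    ((Commute.sum_left _ _ _ fun k _ => ((hAcomm k j).cfc_real _).smul_left _).cfc_real _).symm
  have hobj (X : Matrix (Fin n) (Fin n) ℂ) :
      ∑ j, w j * (((1 - t) • A j + t • X - matPow (A j) (1 - t) * matPow X t).trace).re =
        hellingerDiv t Q X + (1 - t) * (∑ j, w j * (A j).trace.re - Q.trace.re) :=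
    sum_mul_hellingerDiv w hw1 A hQC X
  have hrhs : ∑ j, w j • (matPow (A j) (1 - t) * matPow X₀ t) = C * matPow X₀ t := by
    simp only [C, Finset.sum_mul, smul_mul_assoc]
  rw [hrhs, hX₀.eq_mul_matPow_iff, hX₀.matPow_eq_iff hC (by linarith)]
  simp only [hobj, add_le_add_iff_right]
  constructor
  · intro hmin
    refine (hellingerDiv_eq_zero_iff ht0 ht1 hQ hX₀).1 <|
      le_antisymm ?_ (hellingerDiv_nonneg ht0 ht1 hQ hX₀)
    simpa [hellingerDiv_self hQ] using hmin Q hQ hAQ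
  · rintro rfl X hX -
    rw [hellingerDiv_self hQ]
    exact hellingerDiv_nonneg ht0 ht1 hQ hX

/-- For `t ∈ (0,1)`, pairwise commuting positive definite `A₁, …, A_m` and
positive weights summing to `1`, a positive definite `X₀` commuting with all `A_j` minimizes
`X ↦ Σ_j w_j Tr((1-t)A_j + tX - A_j^{1-t}X^t)` over positive definite matrices commuting with
all `A_j` if and only if it solves `X = Σ_j w_j A_j^{1-t} X^t`, i.e. it is the weighted power
mean of order `1-t`. -/
theorem commutative_power_barycenter {n m : ℕ} (t : ℝ) (ht0 : 0 < t) (ht1 : t < 1)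
    (A : Fin m → Matrix (Fin n) (Fin n) ℂ) (hA : ∀ j, (A j).PosDef)
    (hAcomm : ∀ j k, Commute (A j) (A k))
    (w : Fin m → ℝ) (hw : ∀ j, 0 < w j) (hw1 : ∑ j, w j = 1)
    (X₀ : Matrix (Fin n) (Fin n) ℂ) (hX₀ : X₀.PosDef) (hX₀A : ∀ j, Commute (A j) X₀) :
    (∀ X : Matrix (Fin n) (Fin n) ℂ, X.PosDef → (∀ j, Commute (A j) X) →
        ∑ j, w j * (((1 - t) • A j + t • X₀ - matPow (A j) (1 - t) * matPow X₀ t).trace).re ≤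
          ∑ j, w j * (((1 - t) • A j + t • X - matPow (A j) (1 - t) * matPow X t).trace).re) ↔
      X₀ = ∑ j, w j • (matPow (A j) (1 - t) * matPow X₀ t) :=
  commutative_power_barycenter_general t ht0 ht1 A hA hAcomm w hw hw1 X₀ hX₀
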